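/- Let F be a field, p ∈ Fˣ. Let S and T be multisets over Fˣ such that S contains a geometric progression {α, pα, …, p^{a−1}α} of ratio p and length a, and T contains a geometric progression {β, pβ, …, p^{b−1}β} of ratio p and length b. Then the product multiset S·T = {st : s ∈ S, t ∈ T} (with multiplicities) contains a geometric progression of ratio p and length a + b − 1. -/

import Mathlib

/-!
The product of the terms `p ^ i * α` and `p ^ j * β` is `p ^ (i + j) * (α * β)`. As
`range (a + b - 1)` has no repeated elements, it then suffices that every `k < a + b - 1`
is a sum `i + j` with `i < a` and `j < b`: take `i = min k (a - 1)` and `j = k - i`.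
-/

namespace Multiset

variable {α β γ δ : Type*}

theorem product_le_product {s s' : Multiset α} {t t' : Multiset β}
    (hs : s ≤ s') (ht : t ≤ t') : s ×ˢ t ≤ s' ×ˢ t' := by
  obtain ⟨d, rfl⟩ := le_iff_exists_add.mp hs
  obtain ⟨e, rfl⟩ := le_iff_exists_add.mp ht
  rw [add_product, product_add, add_assoc]
  exact le_add_right _ _

theorem map_prodMap_product (f : α → γ) (g : β → δ) (s : Multiset α) (t : Multiset β) :
    (s ×ˢ t).map (Prod.map f g) = s.map f ×ˢ t.map g := by
  induction s using Multiset.induction with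
  | empty => simp
  | cons a s ih => simp [cons_product, map_map, ih]

theorem range_le_map_add_product_range {a b : ℕ} (ha : 1 ≤ a) (hb : 1 ≤ b) :
    range (a + b - 1) ≤ (range a ×ˢ range b).map (fun x => x.1 + x.2) := by
  rw [le_iff_subset (nodup_range _)]
  intro k hk
  rw [mem_range] at hk
  refine mem_map.mpr ⟨(min k (a - 1), k - min k (a - 1)), ?_, ?_⟩ <;>
    simp only [mem_product, mem_range] <;> omega

theorem map_mul_product_geometric {M : Type*} [CommMonoid M] (p u v : M) (a b : ℕ) :
    ((range a).map (fun i => p ^ i * u) ×ˢ (range b).map (fun j => p ^ j * v)).map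
        (fun x => x.1 * x.2) =
      ((range a ×ˢ range b).map (fun x => x.1 + x.2)).map (fun k => p ^ k * (u * v)) := by
  rw [← map_prodMap_product, map_map, map_map]
  refine map_congr rfl fun x _ => ?_
  simp only [Function.comp_apply, Prod.map, pow_add, mul_mul_mul_comm]

end Multiset

/-- If `S` contains a geometric progression of ratio `p` and length `a ≥ 1`, and `T`
contains one of length `b ≥ 1`, then the product multiset `S·T` contains a geometric
progression of ratio `p` and length `a + b - 1`. -/
theorem stmt_7 {F : Type*} [Field F] (p : Fˣ) (a b : ℕ) (ha : 1 ≤ a) (hb : 1 ≤ b)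
    (S T : Multiset Fˣ) (α β : Fˣ)
    (hS : (Multiset.range a).map (fun j => p ^ j * α) ≤ S)
    (hT : (Multiset.range b).map (fun j => p ^ j * β) ≤ T) :
    ∃ γ : Fˣ, (Multiset.range (a + b - 1)).map (fun j => p ^ j * γ) ≤
      (S ×ˢ T).map (fun x => x.1 * x.2) := by
  refine ⟨α * β, ?_⟩
  calc (Multiset.range (a + b - 1)).map (fun j => p ^ j * (α * β))
      ≤ ((Multiset.range a ×ˢ Multiset.range b).map (fun x => x.1 + x.2)).map
          (fun k => p ^ k * (α * β)) :=
        Multiset.map_le_map (Multiset.range_le_map_add_product_range ha hb)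
    _ = ((Multiset.range a).map (fun j => p ^ j * α) ×ˢ
          (Multiset.range b).map (fun j => p ^ j * β)).map (fun x => x.1 * x.2) :=
        (Multiset.map_mul_product_geometric p α β a b).symm
    _ ≤ (S ×ˢ T).map (fun x => x.1 * x.2) :=
        Multiset.map_le_map (Multiset.product_le_product hS hT)
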